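/- Let G=(W,R,𝒜) be a general Kripke frame with R reflexive and transitive and let c ∈ W. If for every n ∈ ℕ there exists an independent set of n unpushed decisions (L₀,R₀),…,(L_{n−1},R_{n−1}) in G at c, then every modal formula valid at c over G belongs to S4FPF; that is, Λ_G(c) ⊆ S4FPF. -/

import Mathlib

namespace MLAR

/-- Modal formulas over a countably infinite set of propositional variables (indexed by ℕ). -/
inductive MF : Type where
  | top : MF
  | var : ℕ → MF
  | and : MF → MF → MF
  | neg : MF → MF
  | dia : MF → MF

namespace MF

/-- □φ := ¬◇¬φ -/
def box (φ : MF) : MF := neg (dia (neg φ))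

/-- Material implication, definable classically from ∧ and ¬. -/
def imp (φ ψ : MF) : MF := neg (and φ (neg ψ))

/-- Uniform substitution. -/
def subst (σ : ℕ → MF) : MF → MF
  | top => top
  | var p => σ p
  | and φ ψ => and (subst σ φ) (subst σ ψ)
  | neg φ => neg (subst σ φ)
  | dia φ => dia (subst σ φ)

/-- Satisfaction of a modal formula at a world of a Kripke model. -/
def Sat {W : Type*} (R : W → W → Prop) (V : ℕ → Set W) : MF → W → Prop
  | top, _ => True
  | var p, w => w ∈ V p
  | and φ ψ, w => Sat R V φ w ∧ Sat R V ψ w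
  | neg φ, w => ¬ Sat R V φ w
  | dia φ, w => ∃ v, R w v ∧ Sat R V φ v

end MF

/-- A boolean evaluation: respects ⊤, ∧, ¬, treating variables and ◇-formulas as atoms. -/
def IsPropEval (v : MF → Prop) : Prop :=
  v MF.top ∧ (∀ φ ψ, v (MF.and φ ψ) ↔ (v φ ∧ v ψ)) ∧ (∀ φ, v (MF.neg φ) ↔ ¬ v φ)

/-- Propositional tautologies. -/
def IsTautology (φ : MF) : Prop := ∀ v, IsPropEval v → v φ

/-- The K-axiom □(p→q)→(□p→□q). -/
def axK : MF := (((MF.var 0).imp (MF.var 1)).box).imp (((MF.var 0).box).imp ((MF.var 1).box))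

/-- Normal modal logics. -/
def IsNormal (L : Set MF) : Prop :=
  (∀ φ, IsTautology φ → φ ∈ L) ∧
  axK ∈ L ∧
  (∀ φ ψ, φ ∈ L → φ.imp ψ ∈ L → ψ ∈ L) ∧
  (∀ φ σ, φ ∈ L → φ.subst σ ∈ L) ∧
  (∀ φ, φ ∈ L → φ.box ∈ L)

/-- The smallest normal modal logic containing Γ. -/
def KPlus (Γ : Set MF) : Set MF := ⋂₀ {L | IsNormal L ∧ Γ ⊆ L}

/-- (T) = p → ◇p -/
def axT : MF := (MF.var 0).imp ((MF.var 0).dia)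
/-- (4) = ◇◇p → ◇p -/
def ax4 : MF := ((MF.var 0).dia.dia).imp ((MF.var 0).dia)
/-- (.2) = ◇□p → □◇p -/
def axDot2 : MF := ((MF.var 0).box.dia).imp ((MF.var 0).dia.box)
/-- (.1) = □◇p → ◇□p -/
def axDot1 : MF := ((MF.var 0).dia.box).imp ((MF.var 0).box.dia)
/-- Grzegorczyk axiom □(□(p→□p)→p)→p -/
def axGrz : MF := ((((MF.var 0).imp ((MF.var 0).box)).box.imp (MF.var 0)).box).imp (MF.var 0)

def S4 : Set MF := KPlus {axT, ax4}
def S4Dot2 : Set MF := KPlus {axT, ax4, axDot2}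
def S4Dot1 : Set MF := KPlus {axT, ax4, axDot1}
def S4Dot2Dot1 : Set MF := KPlus {axT, ax4, axDot2, axDot1}
def Grz : Set MF := KPlus {axGrz}

/-- Transition systems over a set AP of atomic propositions. -/
structure TS (AP : Type) : Type 1 where
  State : Type
  rel : State → State → Prop
  init : Set State
  label : State → Set AP
  nonempty : Nonempty State
  serial : ∀ s, ∃ t, rel s t

/-- `f` witnesses that T₁ is an abstraction of T₂. -/
def IsAbstractionMap {AP : Type} (T₁ T₂ : TS AP) (f : T₂.State → T₁.State) : Prop :=
  Function.Surjective f ∧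
  (∀ s, T₁.label (f s) = T₂.label s) ∧
  (∀ a b, T₁.rel a b ↔ ∃ s t, T₂.rel s t ∧ f s = a ∧ f t = b) ∧
  T₁.init = f '' T₂.init

/-- `Abs T₁ T₂` : T₁ is an abstraction of T₂ (written T₁ ⇝ T₂; T₂ is a refinement of T₁). -/
def Abs {AP : Type} (T₁ T₂ : TS AP) : Prop := ∃ f, IsAbstractionMap T₁ T₂ f

mutual
/-- CTL state formulas. -/
inductive CTLs (AP : Type) : Type where
  | top : CTLs AP
  | atom : AP → CTLs AP
  | and : CTLs AP → CTLs AP → CTLs AP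
  | neg : CTLs AP → CTLs AP
  | ex : CTLp AP → CTLs AP
  | al : CTLp AP → CTLs AP
/-- CTL path formulas. -/
inductive CTLp (AP : Type) : Type where
  | next : CTLs AP → CTLp AP
  | untl : CTLs AP → CTLs AP → CTLp AP
end

/-- Infinite paths of a transition system. -/
def TS.IsPath {AP : Type} (T : TS AP) (π : ℕ → T.State) : Prop := ∀ i, T.rel (π i) (π (i + 1))

mutual
/-- Satisfaction of CTL state formulas at states. -/
def CTLs.Sat {AP : Type} (T : TS AP) : CTLs AP → T.State → Prop
  | .top, _ => True
  | .atom a, s => a ∈ T.label s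
  | .and φ ψ, s => CTLs.Sat T φ s ∧ CTLs.Sat T ψ s
  | .neg φ, s => ¬ CTLs.Sat T φ s
  | .ex φ, s => ∃ π, T.IsPath π ∧ π 0 = s ∧ CTLp.Sat T φ π
  | .al φ, s => ∀ π, T.IsPath π → π 0 = s → CTLp.Sat T φ π
/-- Satisfaction of CTL path formulas on paths. -/
def CTLp.Sat {AP : Type} (T : TS AP) : CTLp AP → (ℕ → T.State) → Prop
  | .next φ, π => CTLs.Sat T φ (π 1)
  | .untl φ ψ, π => ∃ j, CTLs.Sat T ψ (π j) ∧ ∀ i, i < j → CTLs.Sat T φ (π i)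
end

/-- A transition system satisfies a CTL state formula iff all its initial states do. -/
def TS.sat {AP : Type} (T : TS AP) (Φ : CTLs AP) : Prop := ∀ s ∈ T.init, CTLs.Sat T Φ s

/-- Admissible valuations on the class C: each variable denotes a CTL-expressible set. -/
def AdmissibleVal {AP : Type} (C : Set (TS AP)) (V : ℕ → Set {S : TS AP // S ∈ C}) : Prop :=
  ∀ p, ∃ Φ : CTLs AP, ∀ S : {S : TS AP // S ∈ C}, S ∈ V p ↔ (S : TS AP).sat Φ

/-- The refinement accessibility relation ⇝ on the class C. -/
def refRel {AP : Type} (C : Set (TS AP)) :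
    {S : TS AP // S ∈ C} → {S : TS AP // S ∈ C} → Prop :=
  fun S₁ S₂ => Abs S₁.1 S₂.1

/-- Validity of a modal formula at a world of the general frame (C, ⇝, Admiss(CTL)). -/
def ValidAt {AP : Type} (C : Set (TS AP)) (φ : MF) (S : {S : TS AP // S ∈ C}) : Prop :=
  ∀ V, AdmissibleVal C V → MF.Sat (refRel C) V φ S

/-- Validity on the general frame (C, ⇝, Admiss(CTL)). -/
def ValidOn {AP : Type} (C : Set (TS AP)) (φ : MF) : Prop := ∀ S, ValidAt C φ S

/-- The class of all finite abstractions of T. -/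
def FinAbs {AP : Type} (T : TS AP) : Set (TS AP) := {S | Finite S.State ∧ Abs S T}

/-- The class of all abstractions of T. -/
def AllAbs {AP : Type} (T : TS AP) : Set (TS AP) := {S | Abs S T}

/-- MLAR^fin_T. -/
def MLARfin {AP : Type} (T : TS AP) : Set MF := {φ | ValidOn (FinAbs T) φ}
/-- MLAR^all_T. -/
def MLARall {AP : Type} (T : TS AP) : Set MF := {φ | ValidOn (AllAbs T) φ}
set_option linter.dupNamespace false in
/-- MLAR on the class of all transition systems over the fixed countably infinite AP = ℕ. -/
def MLAR : Set MF := {φ | ValidOn (Set.univ : Set (TS ℕ)) φ}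

/-- Finite partial functions {0,…,n−1} ⇀ {0,1}. -/
def FPF (n : ℕ) : Type := Fin n → Option Bool

/-- g ≼ h iff h extends g. -/
def FPFle {n : ℕ} (g h : FPF n) : Prop := ∀ i x, g i = some x → h i = some x

/-- The modal logic of all finite partial function posets. -/
def S4FPF : Set MF := {φ | ∀ n : ℕ, ∀ V : ℕ → Set (FPF n), ∀ w, MF.Sat FPFle V φ w}

/-- Admissible-set algebra of a general Kripke frame:
closed under complements and finite (including empty and binary) unions. -/
def IsGeneralFrameAdmiss {W : Type*} (𝒜 : Set (Set W)) : Prop :=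
  (∅ : Set W) ∈ 𝒜 ∧ (∀ A ∈ 𝒜, Aᶜ ∈ 𝒜) ∧ (∀ A ∈ 𝒜, ∀ B ∈ 𝒜, A ∪ B ∈ 𝒜)

/-- Formulas valid at a world of a general Kripke frame (W, R, 𝒜). -/
def GValidAt {W : Type*} (R : W → W → Prop) (𝒜 : Set (Set W)) (φ : MF) (c : W) : Prop :=
  ∀ V : ℕ → Set W, (∀ p, V p ∈ 𝒜) → MF.Sat R V φ c

/-- A is a pure button at c: □(b→□b) and □◇b hold at c under V(b) = A. -/
def PureButton {W : Type*} (R : W → W → Prop) (c : W) (A : Set W) : Prop :=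
  (∀ d, R c d → d ∈ A → ∀ e, R d e → e ∈ A) ∧ (∀ d, R c d → ∃ e, R d e ∧ e ∈ A)

/-- A is a pure weak button at c: □(b→□b) and ◇b hold at c under V(b) = A. -/
def PureWeakButton {W : Type*} (R : W → W → Prop) (c : W) (A : Set W) : Prop :=
  (∀ d, R c d → d ∈ A → ∀ e, R d e → e ∈ A) ∧ (∃ e, R c e ∧ e ∈ A)

/-- B is a switch at c: □(◇s ∧ ◇¬s) holds at c under V(s) = B. -/
def IsSwitch {W : Type*} (R : W → W → Prop) (c : W) (B : Set W) : Prop :=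
  ∀ d, R c d → (∃ e, R d e ∧ e ∈ B) ∧ (∃ e, R d e ∧ e ∉ B)

/-- C is a B-restricted switch at c:
□(¬B → (◇(s ∧ ¬B) ∧ ◇(¬s ∧ ¬B))) holds at c under V(s) = C. -/
def RestrictedSwitch {W : Type*} (R : W → W → Prop) (c : W) (B C : Set W) : Prop :=
  ∀ d, R c d → d ∉ B →
    (∃ e, R d e ∧ e ∈ C ∧ e ∉ B) ∧ (∃ e, R d e ∧ e ∉ C ∧ e ∉ B)

/-- Independence of unpushed pure buttons A and switches B at c. -/
def Independent {W : Type*} (R : W → W → Prop) (c : W) {n m : ℕ}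
    (A : Fin n → Set W) (B : Fin m → Set W) : Prop :=
  ∀ (I₀ I₁ : Set (Fin n)) (J₀ J₁ : Set (Fin m)), I₀ ⊆ I₁ →
    ∀ d, R c d →
      ((∀ i, i ∈ I₀ ↔ d ∈ A i) ∧ (∀ j, j ∈ J₀ ↔ d ∈ B j)) →
      ∃ e, R d e ∧ (∀ i, i ∈ I₁ ↔ e ∈ A i) ∧ (∀ j, j ∈ J₁ ↔ e ∈ B j)

/-- Independence until B of pure buttons A and B-restricted switches C at c. -/
def IndependentUntil {W : Type*} (R : W → W → Prop) (c : W) (Bb : Set W) {n m : ℕ}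
    (A : Fin n → Set W) (C : Fin m → Set W) : Prop :=
  ∀ (I₀ I₁ : Set (Fin n)) (J₀ J₁ : Set (Fin m)), I₀ ⊆ I₁ →
    ∀ d, R c d →
      ((∀ i, i ∈ I₀ ↔ d ∈ A i) ∧ (∀ j, j ∈ J₀ ↔ d ∈ C j) ∧ d ∉ Bb) →
      ∃ e, R d e ∧ (∀ i, i ∈ I₁ ↔ e ∈ A i) ∧ (∀ j, j ∈ J₁ ↔ e ∈ C j) ∧ e ∉ Bb

/-- (L, Rr) is a decision at c: a pair of mutually exclusive unpushed pure weak buttons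
whose union is an unpushed pure button, with □(¬l ∨ ¬r) and □((◇l ∧ ◇r) ∨ l ∨ r) at c. -/
def Decision {W : Type*} (R : W → W → Prop) (c : W) (L Rr : Set W) : Prop :=
  PureWeakButton R c L ∧ c ∉ L ∧
  PureWeakButton R c Rr ∧ c ∉ Rr ∧
  PureButton R c (L ∪ Rr) ∧ c ∉ L ∪ Rr ∧
  (∀ d, R c d → ¬(d ∈ L ∧ d ∈ Rr)) ∧
  (∀ d, R c d → (((∃ e, R d e ∧ e ∈ L) ∧ (∃ e, R d e ∧ e ∈ Rr)) ∨ d ∈ L ∨ d ∈ Rr))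

/-- Independence of decisions at c. -/
def IndependentDecisions {W : Type*} (R : W → W → Prop) (c : W) {n : ℕ}
    (L Rr : Fin n → Set W) : Prop :=
  ∀ (I₀ I₁ J₀ J₁ : Set (Fin n)), I₀ ⊆ I₁ → J₀ ⊆ J₁ → (∀ i ∈ J₁, i ∉ I₁) →
    ∀ d, R c d →
      ((∀ i, i ∈ I₀ ↔ d ∈ L i) ∧ (∀ i, i ∈ J₀ ↔ d ∈ Rr i)) →
      ∃ e, R d e ∧ (∀ i, i ∈ I₁ ↔ e ∈ L i) ∧ (∀ i, i ∈ J₁ ↔ e ∈ Rr i)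

section Stmt16Aux

instance (n : ℕ) : Fintype (FPF n) := inferInstanceAs (Fintype (Fin n → Option Bool))
instance (n : ℕ) : DecidableEq (FPF n) := inferInstanceAs (DecidableEq (Fin n → Option Bool))

open Classical in
/-- The projection map used in the proof of Statement 16. -/
noncomputable def pifun {W : Type*} {n : ℕ} (w : FPF n) (L Rr : Fin n → Set W) (e : W) :
    FPF n := fun i =>
  match w i with
  | some x => some x
  | none => if e ∈ L i then some true else if e ∈ Rr i then some false else none

lemma pifun_some {W : Type*} {n : ℕ} (w : FPF n) (L Rr : Fin n → Set W) (e : W) {i : Fin n}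
    {x : Bool} (h : w i = some x) : pifun w L Rr e i = some x := by
  simp [pifun, h]

open Classical in
lemma pifun_none {W : Type*} {n : ℕ} (w : FPF n) (L Rr : Fin n → Set W) (e : W) {i : Fin n}
    (h : w i = none) :
    pifun w L Rr e i =
      (if e ∈ L i then some true else if e ∈ Rr i then some false else none) := by
  simp [pifun, h]

lemma pifun_none_true {W : Type*} {n : ℕ} {w : FPF n} {L Rr : Fin n → Set W} {e : W} {i : Fin n}
    (h : w i = none) : pifun w L Rr e i = some true ↔ e ∈ L i := by
  rw [pifun_none w L Rr e h]
  split_ifs with h1 h2 <;> simp_all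

lemma pifun_none_false {W : Type*} {n : ℕ} {w : FPF n} {L Rr : Fin n → Set W} {e : W} {i : Fin n}
    (h : w i = none) : pifun w L Rr e i = some false ↔ (e ∉ L i ∧ e ∈ Rr i) := by
  rw [pifun_none w L Rr e h]
  split_ifs with h1 h2 <;> simp_all

lemma pifun_none_none {W : Type*} {n : ℕ} {w : FPF n} {L Rr : Fin n → Set W} {e : W} {i : Fin n}
    (h : w i = none) : pifun w L Rr e i = none ↔ (e ∉ L i ∧ e ∉ Rr i) := by
  rw [pifun_none w L Rr e h]
  split_ifs with h1 h2 <;> simp_all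

lemma admiss_univ {W : Type*} {𝒜 : Set (Set W)} (h : IsGeneralFrameAdmiss 𝒜) :
    (Set.univ : Set W) ∈ 𝒜 := by
  have := h.2.1 ∅ h.1; simpa using this

lemma admiss_inter {W : Type*} {𝒜 : Set (Set W)} (h : IsGeneralFrameAdmiss 𝒜)
    {A B : Set W} (hA : A ∈ 𝒜) (hB : B ∈ 𝒜) : A ∩ B ∈ 𝒜 := by
  have := h.2.1 _ (h.2.2 _ (h.2.1 _ hA) _ (h.2.1 _ hB))
  simpa [Set.compl_union] using this

lemma admiss_biUnion {W : Type*} {𝒜 : Set (Set W)} (h : IsGeneralFrameAdmiss 𝒜)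
    {ι : Type*} (s : Finset ι) (A : ι → Set W) (hA : ∀ i ∈ s, A i ∈ 𝒜) :
    (⋃ i ∈ s, A i) ∈ 𝒜 := by
  classical
  revert hA
  induction s using Finset.induction_on with
  | empty => intro _; simpa using h.1
  | insert _ _ ha ih =>
      intro hA
      rw [Finset.set_biUnion_insert]
      exact h.2.2 _ (hA _ (Finset.mem_insert_self _ _)) _
        (ih fun i hi => hA i (Finset.mem_insert_of_mem hi))

lemma admiss_biInter {W : Type*} {𝒜 : Set (Set W)} (h : IsGeneralFrameAdmiss 𝒜)
    {ι : Type*} (s : Finset ι) (A : ι → Set W) (hA : ∀ i ∈ s, A i ∈ 𝒜) :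
    (⋂ i ∈ s, A i) ∈ 𝒜 := by
  classical
  revert hA
  induction s using Finset.induction_on with
  | empty => intro _; simpa using admiss_univ h
  | insert _ _ ha ih =>
      intro hA
      rw [Finset.set_biInter_insert]
      exact admiss_inter h (hA _ (Finset.mem_insert_self _ _))
        (ih fun i hi => hA i (Finset.mem_insert_of_mem hi))

end Stmt16Aux

/-- If at c there are, for every n, n independent unpushed decisions
(of admissible sets) on a reflexive transitive general frame, then Λ_G(c) ⊆ S4FPF. -/
theorem stmt_16 {W : Type*} (R : W → W → Prop) (𝒜 : Set (Set W))
    (h𝒜 : IsGeneralFrameAdmiss 𝒜) (hrefl : Reflexive R) (htrans : Transitive R) (c : W)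
    (h : ∀ n : ℕ, ∃ L Rr : Fin n → Set W,
      (∀ i, L i ∈ 𝒜 ∧ Rr i ∈ 𝒜 ∧ Decision R c (L i) (Rr i)) ∧
      IndependentDecisions R c L Rr) :
    {φ | GValidAt R 𝒜 φ c} ⊆ S4FPF := by
  classical
  intro φ hφ n V w
  obtain ⟨L, Rr, hLR, hind⟩ := h n
  -- shortcuts for the decision properties
  have hLpers : ∀ i, ∀ d, R c d → d ∈ L i → ∀ e, R d e → e ∈ L i :=
    fun i => ((hLR i).2.2).1.1
  have hRpers : ∀ i, ∀ d, R c d → d ∈ Rr i → ∀ e, R d e → e ∈ Rr i :=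
    fun i => ((hLR i).2.2).2.2.1.1
  have hcL : ∀ i, c ∉ L i := fun i => ((hLR i).2.2).2.1
  have hcR : ∀ i, c ∉ Rr i := fun i => ((hLR i).2.2).2.2.2.1
  have hexcl : ∀ i, ∀ d, R c d → ¬(d ∈ L i ∧ d ∈ Rr i) :=
    fun i => ((hLR i).2.2).2.2.2.2.2.2.1
  set π : W → FPF n := pifun w L Rr with hπ
  -- π maps c to w
  have hπc : π c = w := by
    funext i
    cases hw : w i with
    | some x => exact pifun_some w L Rr c hw
    | none =>
        rw [hπ, pifun_none w L Rr c hw]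
        simp [hcL i, hcR i]
  -- forth condition
  have hforth : ∀ e e', R c e → R e e' → FPFle (π e) (π e') := by
    intro e e' hce hee' i x hx
    cases hw : w i with
    | some y =>
        rw [hπ] at hx
        rw [pifun_some w L Rr e hw] at hx
        rw [← hx]
        exact pifun_some w L Rr e' hw
    | none =>
        by_cases heL : e ∈ L i
        · have hx' : x = true := by
            rw [hπ, pifun_none w L Rr e hw] at hx
            simp [heL] at hx
            exact hx
          have he'L : e' ∈ L i := hLpers i e hce heL e' hee'
          rw [hx', hπ]
          exact (pifun_none_true hw).2 he'L
        · by_cases heR : e ∈ Rr i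
          · have hx' : x = false := by
              rw [hπ, pifun_none w L Rr e hw] at hx
              simp [heL, heR] at hx
              exact hx
            have he'R : e' ∈ Rr i := hRpers i e hce heR e' hee'
            have he'L : e' ∉ L i := fun hc =>
              hexcl i e' (htrans hce hee') ⟨hc, he'R⟩
            rw [hx', hπ]
            exact (pifun_none_false hw).2 ⟨he'L, he'R⟩
          · exfalso
            rw [hπ, pifun_none w L Rr e hw] at hx
            simp [heL, heR] at hx
  -- back condition
  have hback : ∀ e, R c e → ∀ g : FPF n, FPFle (π e) g → ∃ e', R e e' ∧ π e' = g := by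
    intro e hce g hg
    have hπeL : ∀ i, w i = none → e ∈ L i → g i = some true := by
      intro i hw heL
      exact hg i true (by rw [hπ]; exact (pifun_none_true hw).2 heL)
    have hπeR : ∀ i, w i = none → e ∈ Rr i → g i = some false := by
      intro i hw heR
      have heL : e ∉ L i := fun hc => hexcl i e hce ⟨hc, heR⟩
      exact hg i false (by rw [hπ]; exact (pifun_none_false hw).2 ⟨heL, heR⟩)
    obtain ⟨e', hee', hI, hJ⟩ := hind {i | e ∈ L i}
      {i | e ∈ L i ∨ (w i = none ∧ g i = some true)}
      {i | e ∈ Rr i}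
      {i | e ∈ Rr i ∨ (w i = none ∧ g i = some false)}
      (fun i hi => Or.inl hi) (fun i hi => Or.inl hi)
      (by
        rintro i (hiR | ⟨hw, hgf⟩) (hiL | ⟨hw', hgt⟩)
        · exact hexcl i e hce ⟨hiL, hiR⟩
        · exact absurd (hπeR i hw' hiR) (by simp [hgt])
        · exact absurd (hπeL i hw hiL) (by simp [hgf])
        · simp [hgf] at hgt)
      e hce ⟨fun i => Iff.rfl, fun i => Iff.rfl⟩
    have hce' : R c e' := htrans hce hee'
    refine ⟨e', hee', ?_⟩
    funext i
    cases hw : w i with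
    | some x =>
        have := hg i x (by rw [hπ]; exact pifun_some w L Rr e hw)
        rw [hπ]
        rw [pifun_some w L Rr e' hw, this]
    | none =>
        have hL' : e' ∈ L i ↔ g i = some true := by
          constructor
          · intro he'L
            rcases (hI i).2 he'L with hiL | ⟨_, hgt⟩
            · exact hπeL i hw hiL
            · exact hgt
          · intro hgt
            exact (hI i).1 (Or.inr ⟨hw, hgt⟩)
        have hR' : e' ∈ Rr i ↔ g i = some false := by
          constructor
          · intro he'R
            rcases (hJ i).2 he'R with hiR | ⟨_, hgf⟩
            · exact hπeR i hw hiR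
            · exact hgf
          · intro hgf
            exact (hJ i).1 (Or.inr ⟨hw, hgf⟩)
        rw [hπ]
        cases hgi : g i with
        | some x =>
            cases x with
            | true => exact (pifun_none_true hw).2 (hL'.2 hgi)
            | false =>
                refine (pifun_none_false hw).2 ⟨?_, hR'.2 hgi⟩
                intro hc
                rw [hL'.1 hc] at hgi
                simp at hgi
        | none =>
            refine (pifun_none_none hw).2 ⟨?_, ?_⟩
            · intro hc; rw [hL'.1 hc] at hgi; simp at hgi
            · intro hc; rw [hR'.1 hc] at hgi; simp at hgi
  -- admissibility of the pulled-back valuation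
  have hfiber : ∀ f : FPF n, {e : W | π e = f} ∈ 𝒜 := by
    intro f
    have heq : {e : W | π e = f} = ⋂ i ∈ (Finset.univ : Finset (Fin n)), {e : W | π e i = f i} := by
      ext e
      simp only [Set.mem_setOf_eq, Set.mem_iInter, Finset.mem_univ, forall_const]
      exact ⟨fun hf i => by rw [hf], fun hf => funext hf⟩
    rw [heq]
    refine admiss_biInter h𝒜 _ _ (fun i _ => ?_)
    cases hw : w i with
    | some x =>
        by_cases hfi : f i = some x
        · have : {e : W | π e i = f i} = Set.univ := by
            ext e
            simp [hπ, pifun_some w L Rr e hw, hfi]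
          rw [this]; exact admiss_univ h𝒜
        · have : {e : W | π e i = f i} = ∅ := by
            ext e
            simp only [Set.mem_setOf_eq, Set.mem_empty_iff_false, iff_false]
            rw [hπ, pifun_some w L Rr e hw]
            exact fun hc => hfi hc.symm
          rw [this]; exact h𝒜.1
    | none =>
        cases hfi : f i with
        | some x =>
            cases x with
            | true =>
                have heq : {e : W | π e i = some true} = L i := by
                  ext e
                  rw [Set.mem_setOf_eq, hπ, pifun_none_true hw]
                rw [heq]; exact (hLR i).1
            | false =>
                have heq : {e : W | π e i = some false} = (L i)ᶜ ∩ Rr i := by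
                  ext e
                  rw [Set.mem_setOf_eq, hπ, pifun_none_false hw]
                  rfl
                rw [heq]
                exact admiss_inter h𝒜 (h𝒜.2.1 _ (hLR i).1) (hLR i).2.1
        | none =>
            have heq : {e : W | π e i = none} = (L i)ᶜ ∩ (Rr i)ᶜ := by
              ext e
              rw [Set.mem_setOf_eq, hπ, pifun_none_none hw]
              rfl
            rw [heq]
            exact admiss_inter h𝒜 (h𝒜.2.1 _ (hLR i).1) (h𝒜.2.1 _ (hLR i).2.1)
  have hpre : ∀ S : Set (FPF n), {e : W | π e ∈ S} ∈ 𝒜 := by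
    intro S
    have heq : {e : W | π e ∈ S} =
        ⋃ f ∈ (S.toFinset : Finset (FPF n)), {e : W | π e = f} := by
      ext e
      simp only [Set.mem_setOf_eq, Set.mem_iUnion, Set.mem_toFinset, exists_prop]
      exact ⟨fun hs => ⟨π e, hs, rfl⟩, fun ⟨f, hf, hef⟩ => hef ▸ hf⟩
    rw [heq]
    exact admiss_biUnion h𝒜 _ _ (fun f _ => hfiber f)
  -- truth lemma
  have key : ∀ ψ : MF, ∀ e, R c e →
      (MF.Sat R (fun p => {e : W | π e ∈ V p}) ψ e ↔ MF.Sat FPFle V ψ (π e)) := by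
    intro ψ
    induction ψ with
    | top => intro e _; simp [MF.Sat]
    | var p => intro e _; exact Iff.rfl
    | and φ₁ φ₂ ih₁ ih₂ =>
        intro e he
        exact and_congr (ih₁ e he) (ih₂ e he)
    | neg φ₁ ih =>
        intro e he
        exact not_congr (ih e he)
    | dia φ₁ ih =>
        intro e he
        constructor
        · rintro ⟨e', hee', hs⟩
          exact ⟨π e', hforth e e' he hee', (ih e' (htrans he hee')).1 hs⟩
        · rintro ⟨g, hgle, hs⟩
          obtain ⟨e', hee', hpe⟩ := hback e he g hgle
          exact ⟨e', hee', (ih e' (htrans he hee')).2 (hpe ▸ hs)⟩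
  have hval : MF.Sat R (fun p => {e : W | π e ∈ V p}) φ c :=
    hφ _ (fun p => hpre (V p))
  have := (key φ c (hrefl c)).1 hval
  rwa [hπc] at this

end MLAR
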